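/- arXiv:quant-ph/0304112 — 3 statements merged into one kernel-verified Lean document; each statement's English description precedes it below -/
import Mathlib

section
/- Let d_A, d_M, d_B ≥ 1 and N ≥ 1 be natural numbers. For j = 1, …, N let U_{A,j} be a unitary complex matrix indexed by Fin d_A × Fin d_M and U_{B,j} a unitary complex matrix indexed by Fin d_M × Fin d_B. Let e₀ denote the standard basis vector of ℂ^{d_A·d_M·d_B} (indexed by Fin d_A × Fin d_M × Fin d_B) at index (0,0,0), and set ψ_N = (I_A ⊗ U_{B,N})·(U_{A,N} ⊗ I_B)⋯(I_A ⊗ U_{B,1})·(U_{A,1} ⊗ I_B)·e₀. Let Π_A be a Hermitian idempotent d_A × d_A matrix and Π_B a Hermitian idempotent d_B × d_B matrix such that (Π_A ⊗ I_M ⊗ I_B)·ψ_N = (I_A ⊗ I_M ⊗ Π_B)·ψ_N. Suppose there exist positive semidefinite matrices Z_{A,0}, …, Z_{A,N} of size d_A × d_A with Z_{A,N} = Π_A and U_{A,j+1}†·(Z_{A,j+1} ⊗ I_M)·U_{A,j+1} ⪯ Z_{A,j} ⊗ I_M for 0 ≤ j ≤ N−1, and positive semidefinite matrices Z_{B,0},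 …, Z_{B,N} of size d_B × d_B with Z_{B,N} = Π_B and U_{B,j+1}†·(I_M ⊗ Z_{B,j+1})·U_{B,j+1} ⪯ I_M ⊗ Z_{B,j} for 0 ≤ j ≤ N−1. Then Re((Z_{A,0})_{0,0}) · Re((Z_{B,0})_{0,0}) ≥ ‖(Π_A ⊗ I_M ⊗ I_B)·ψ_N‖². (Certificate form of Kitaev's bound p_{1*}·p_{*1} ≥ p_1 for two-party coin flipping.) -/
/-!
Kitaev's argument: the potential `Φ j = ⟨ψ_j, (Z_{A,j} ⊗ I_M ⊗ Z_{B,j}) ψ_j⟩` is non-increasing.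
In round `j`, Bob's move cannot increase it because `Z_{A,j+1} ⪰ 0` tensored with Bob's dual
constraint is positive semidefinite, and Alice's move cannot because her dual constraint
tensored with `Z_{B,j} ⪰ 0` is. At `j = 0` the potential is `(Z_{A,0})₀₀ (Z_{B,0})₀₀`; at `j = N`,
as `Π_A` is Hermitian and `(Π_A ⊗ I ⊗ I) ψ_N = (I ⊗ I ⊗ Π_B) ψ_N`, it is `‖(Π_A ⊗ I ⊗ I) ψ_N‖²`.
-/

open Matrix Kronecker
open scoped ComplexOrder

/-- The triple Kronecker product `A ⊗ B ⊗ C` on `ℂ^{d_A} ⊗ ℂ^{d_M} ⊗ ℂ^{d_B}`. -/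
noncomputable def tk {dA dM dB : ℕ} (A : Matrix (Fin dA) (Fin dA) ℂ)
    (B : Matrix (Fin dM) (Fin dM) ℂ) (C : Matrix (Fin dB) (Fin dB) ℂ) :
    Matrix (Fin dA × Fin dM × Fin dB) (Fin dA × Fin dM × Fin dB) ℂ :=
  fun p q => A p.1 q.1 * B p.2.1 q.2.1 * C p.2.2 q.2.2

/-- The extension `U ⊗ I_B` of a matrix `U` on `ℂ^{d_A} ⊗ ℂ^{d_M}`. -/
noncomputable def extA {dA dM : ℕ} (dB : ℕ)
    (U : Matrix (Fin dA × Fin dM) (Fin dA × Fin dM) ℂ) :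
    Matrix (Fin dA × Fin dM × Fin dB) (Fin dA × Fin dM × Fin dB) ℂ :=
  fun p q => if p.2.2 = q.2.2 then U (p.1, p.2.1) (q.1, q.2.1) else 0

/-- The extension `I_A ⊗ U` of a matrix `U` on `ℂ^{d_M} ⊗ ℂ^{d_B}`. -/
noncomputable def extB (dA : ℕ) {dM dB : ℕ}
    (U : Matrix (Fin dM × Fin dB) (Fin dM × Fin dB) ℂ) :
    Matrix (Fin dA × Fin dM × Fin dB) (Fin dA × Fin dM × Fin dB) ℂ :=
  fun p q => if p.1 = q.1 then U p.2 q.2 else 0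

namespace Matrix

variable {m n R 𝕜 : Type*}

theorem sub_kronecker [Ring R] (A B : Matrix m m R) (C : Matrix n n R) :
    (A - B) ⊗ₖ C = A ⊗ₖ C - B ⊗ₖ C := by
  ext; simp [sub_mul]

theorem kronecker_sub [Ring R] (A : Matrix m m R) (B C : Matrix n n R) :
    A ⊗ₖ (B - C) = A ⊗ₖ B - A ⊗ₖ C := by
  ext; simp [mul_sub]

variable [Fintype m] [Fintype n]

theorem star_dotProduct_mulVec_le_of_posSemidef_sub_conj [CommRing R] [PartialOrder R]
    [StarRing R] [IsOrderedAddMonoid R] {M M' A : Matrix n n R}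
    (h : (M - Aᴴ * M' * A).PosSemidef) (x : n → R) :
    star (A *ᵥ x) ⬝ᵥ M' *ᵥ (A *ᵥ x) ≤ star x ⬝ᵥ M *ᵥ x := by
  have hx := h.dotProduct_mulVec_nonneg x
  rw [sub_mulVec, dotProduct_sub, sub_nonneg] at hx
  rwa [star_mulVec, ← dotProduct_mulVec, mulVec_mulVec, mulVec_mulVec]

variable [RCLike 𝕜]

theorem posSemidef_kronecker_sub_conj_one_kronecker [DecidableEq m] {Z : Matrix m m 𝕜}
    {W W' U : Matrix n n 𝕜} (hZ : Z.PosSemidef) (hW : (W - Uᴴ * W' * U).PosSemidef) :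
    (Z ⊗ₖ W - (1 ⊗ₖ U)ᴴ * (Z ⊗ₖ W') * (1 ⊗ₖ U)).PosSemidef := by
  rw [conjTranspose_kronecker, conjTranspose_one, ← mul_kronecker_mul, ← mul_kronecker_mul,
    one_mul, mul_one, ← kronecker_sub]
  exact hZ.kronecker hW

theorem posSemidef_kronecker_sub_conj_kronecker_one [DecidableEq n] {W W' U : Matrix m m 𝕜}
    {Z : Matrix n n 𝕜} (hW : (W - Uᴴ * W' * U).PosSemidef) (hZ : Z.PosSemidef) :
    (W ⊗ₖ Z - (U ⊗ₖ 1)ᴴ * (W' ⊗ₖ Z) * (U ⊗ₖ 1)).PosSemidef := by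
  rw [conjTranspose_kronecker, conjTranspose_one, ← mul_kronecker_mul, ← mul_kronecker_mul,
    one_mul, mul_one, ← sub_kronecker]
  exact hW.kronecker hZ

theorem IsHermitian.star_dotProduct_mul_mulVec_of_mulVec_eq {P Q : Matrix n n 𝕜}
    (hP : P.IsHermitian) {x : n → 𝕜} (hQ : Q *ᵥ x = P *ᵥ x) :
    star x ⬝ᵥ (P * Q) *ᵥ x = star (P *ᵥ x) ⬝ᵥ P *ᵥ x := by
  rw [← mulVec_mulVec, hQ, star_mulVec, ← dotProduct_mulVec, hP.eq]

end Matrix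

section TripleSystem

variable {dA dM dB : ℕ}

theorem tk_eq_kronecker (A : Matrix (Fin dA) (Fin dA) ℂ) (B : Matrix (Fin dM) (Fin dM) ℂ)
    (C : Matrix (Fin dB) (Fin dB) ℂ) : tk A B C = A ⊗ₖ (B ⊗ₖ C) := by
  ext; simp [tk, mul_assoc]

theorem tk_eq_submatrix_kronecker (A : Matrix (Fin dA) (Fin dA) ℂ)
    (B : Matrix (Fin dM) (Fin dM) ℂ) (C : Matrix (Fin dB) (Fin dB) ℂ) :
    tk A B C = ((A ⊗ₖ B) ⊗ₖ C).submatrix (Equiv.prodAssoc _ _ _).symm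
      (Equiv.prodAssoc _ _ _).symm :=
  rfl

theorem extA_eq_submatrix_kronecker (U : Matrix (Fin dA × Fin dM) (Fin dA × Fin dM) ℂ) :
    extA dB U = (U ⊗ₖ 1).submatrix (Equiv.prodAssoc _ _ _).symm (Equiv.prodAssoc _ _ _).symm := by
  ext; simp [extA, one_apply]

theorem extB_eq_one_kronecker (U : Matrix (Fin dM × Fin dB) (Fin dM × Fin dB) ℂ) :
    extB dA U = 1 ⊗ₖ U := by
  ext; simp [extB, one_apply]

theorem posSemidef_tk_sub_conj_extA {W W' : Matrix (Fin dA) (Fin dA) ℂ}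
    {U : Matrix (Fin dA × Fin dM) (Fin dA × Fin dM) ℂ} {Z : Matrix (Fin dB) (Fin dB) ℂ}
    (hW : (W ⊗ₖ 1 - Uᴴ * (W' ⊗ₖ 1) * U).PosSemidef) (hZ : Z.PosSemidef) :
    (tk W 1 Z - (extA dB U)ᴴ * tk W' 1 Z * extA dB U).PosSemidef := by
  rw [tk_eq_submatrix_kronecker, tk_eq_submatrix_kronecker, extA_eq_submatrix_kronecker,
    conjTranspose_submatrix, submatrix_mul_equiv, submatrix_mul_equiv]
  exact (posSemidef_kronecker_sub_conj_kronecker_one hW hZ).submatrix _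

theorem posSemidef_tk_sub_conj_extB {Z : Matrix (Fin dA) (Fin dA) ℂ}
    {W W' : Matrix (Fin dB) (Fin dB) ℂ} {U : Matrix (Fin dM × Fin dB) (Fin dM × Fin dB) ℂ}
    (hZ : Z.PosSemidef) (hW : (1 ⊗ₖ W - Uᴴ * (1 ⊗ₖ W') * U).PosSemidef) :
    (tk Z 1 W - (extB dA U)ᴴ * tk Z 1 W' * extB dA U).PosSemidef := by
  rw [tk_eq_kronecker, tk_eq_kronecker, extB_eq_one_kronecker]
  exact posSemidef_kronecker_sub_conj_one_kronecker hZ hW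

theorem tk_mul_tk (A : Matrix (Fin dA) (Fin dA) ℂ) (C : Matrix (Fin dB) (Fin dB) ℂ) :
    tk A (1 : Matrix (Fin dM) (Fin dM) ℂ) 1 * tk 1 1 C = tk A 1 C := by
  simp only [tk_eq_kronecker, ← mul_kronecker_mul, mul_one, one_mul]

theorem isHermitian_tk_one_one {A : Matrix (Fin dA) (Fin dA) ℂ} (hA : A.IsHermitian) :
    (tk A (1 : Matrix (Fin dM) (Fin dM) ℂ) (1 : Matrix (Fin dB) (Fin dB) ℂ)).IsHermitian := by
  rw [IsHermitian, tk_eq_kronecker, conjTranspose_kronecker, hA.eq, conjTranspose_kronecker,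
    conjTranspose_one, conjTranspose_one]

end TripleSystem

theorem stmt_8_general (dA dM dB N : ℕ) (hdA : 0 < dA) (hdM : 0 < dM) (hdB : 0 < dB)
    (UA : ℕ → Matrix (Fin dA × Fin dM) (Fin dA × Fin dM) ℂ)
    (UB : ℕ → Matrix (Fin dM × Fin dB) (Fin dM × Fin dB) ℂ)
    (χ : ℕ → (Fin dA × Fin dM × Fin dB → ℂ))
    (hχ0 : χ 0 = fun p => if p = (⟨0, hdA⟩, ⟨0, hdM⟩, ⟨0, hdB⟩) then 1 else 0)
    (hχstep : ∀ j < N, χ (j + 1) =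
      (extB dA (UB j)).mulVec ((extA dB (UA j)).mulVec (χ j)))
    (PA : Matrix (Fin dA) (Fin dA) ℂ) (PB : Matrix (Fin dB) (Fin dB) ℂ)
    (hPAh : PA.IsHermitian)
    (hagree : (tk PA 1 1).mulVec (χ N) = (tk 1 1 PB).mulVec (χ N))
    (ZA : ℕ → Matrix (Fin dA) (Fin dA) ℂ) (ZB : ℕ → Matrix (Fin dB) (Fin dB) ℂ)
    (hZA : ∀ j ≤ N, (ZA j).PosSemidef) (hZB : ∀ j ≤ N, (ZB j).PosSemidef)
    (hZAN : ZA N = PA) (hZBN : ZB N = PB)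
    (hZAstep : ∀ j < N, (ZA j ⊗ₖ (1 : Matrix (Fin dM) (Fin dM) ℂ) -
      (UA j)ᴴ * (ZA (j + 1) ⊗ₖ (1 : Matrix (Fin dM) (Fin dM) ℂ)) * UA j).PosSemidef)
    (hZBstep : ∀ j < N, ((1 : Matrix (Fin dM) (Fin dM) ℂ) ⊗ₖ ZB j -
      (UB j)ᴴ * ((1 : Matrix (Fin dM) (Fin dM) ℂ) ⊗ₖ ZB (j + 1)) * UB j).PosSemidef) :
    (ZA 0 ⟨0, hdA⟩ ⟨0, hdA⟩).re * (ZB 0 ⟨0, hdB⟩ ⟨0, hdB⟩).re ≥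
    (star ((tk PA 1 1).mulVec (χ N)) ⬝ᵥ ((tk PA 1 1).mulVec (χ N))).re := by
  set Φ : ℕ → ℂ := fun j => star (χ j) ⬝ᵥ tk (ZA j) 1 (ZB j) *ᵥ χ j with hΦ
  have hstep : ∀ j < N, Φ (j + 1) ≤ Φ j := fun j hj => by
    simp only [hΦ, hχstep j hj]
    exact (star_dotProduct_mulVec_le_of_posSemidef_sub_conj
      (posSemidef_tk_sub_conj_extB (hZA (j + 1) hj) (hZBstep j hj)) _).trans
      (star_dotProduct_mulVec_le_of_posSemidef_sub_conj
        (posSemidef_tk_sub_conj_extA (hZAstep j hj) (hZB j hj.le)) _)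
  have hmono : ∀ k ≤ N, Φ k ≤ Φ 0 := by
    intro k
    induction k with
    | zero => exact fun _ => le_rfl
    | succ k ih => exact fun hk => (hstep k hk).trans (ih (Nat.le_of_succ_le hk))
  have hΦ0 : Φ 0 = ZA 0 ⟨0, hdA⟩ ⟨0, hdA⟩ * ZB 0 ⟨0, hdB⟩ ⟨0, hdB⟩ := by
    simp [hΦ, hχ0, ← Pi.single_apply, tk]
  have hΦN : Φ N = star ((tk PA 1 1).mulVec (χ N)) ⬝ᵥ ((tk PA 1 1).mulVec (χ N)) := by
    simp only [hΦ, hZAN, hZBN]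
    rw [← tk_mul_tk]
    exact (isHermitian_tk_one_one hPAh).star_dotProduct_mul_mulVec_of_mulVec_eq hagree.symm
  have hA0 := Complex.nonneg_iff.mp ((hZA 0 N.zero_le).diag_nonneg (i := ⟨0, hdA⟩))
  have hB0 := Complex.nonneg_iff.mp ((hZB 0 N.zero_le).diag_nonneg (i := ⟨0, hdB⟩))
  rw [ge_iff_le, ← hΦN]
  calc (Φ N).re ≤ (Φ 0).re := (Complex.le_def.mp (hmono N le_rfl)).1
    _ = _ := by rw [hΦ0, Complex.mul_re, ← hA0.2, ← hB0.2, zero_mul, sub_zero]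

/-- Certificate form of Kitaev's bound `p₁* · p*₁ ≥ p₁` for two-party coin
flipping: given dual-feasible sequences `Z_{A,j}`, `Z_{B,j}` for the two
cheating SDPs, the product of their initial entries bounds the honest
probability of outcome 1 from below.  Here `χ j` is the honest state after
round `j` (rounds are indexed `0, …, N-1`, round `j` applying `U_{A,j}` then
`U_{B,j}`), and `Π_A`, `Π_B` are the final projections for outcome 1. -/
theorem stmt_8 (dA dM dB N : ℕ) (hdA : 0 < dA) (hdM : 0 < dM) (hdB : 0 < dB) (hN : 1 ≤ N)
    (UA : ℕ → Matrix (Fin dA × Fin dM) (Fin dA × Fin dM) ℂ)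
    (UB : ℕ → Matrix (Fin dM × Fin dB) (Fin dM × Fin dB) ℂ)
    (hUA : ∀ j < N, UA j ∈ Matrix.unitaryGroup (Fin dA × Fin dM) ℂ)
    (hUB : ∀ j < N, UB j ∈ Matrix.unitaryGroup (Fin dM × Fin dB) ℂ)
    (χ : ℕ → (Fin dA × Fin dM × Fin dB → ℂ))
    (hχ0 : χ 0 = fun p => if p = (⟨0, hdA⟩, ⟨0, hdM⟩, ⟨0, hdB⟩) then 1 else 0)
    (hχstep : ∀ j < N, χ (j + 1) =
      (extB dA (UB j)).mulVec ((extA dB (UA j)).mulVec (χ j)))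
    (PA : Matrix (Fin dA) (Fin dA) ℂ) (PB : Matrix (Fin dB) (Fin dB) ℂ)
    (hPAh : PA.IsHermitian) (hPA2 : PA * PA = PA)
    (hPBh : PB.IsHermitian) (hPB2 : PB * PB = PB)
    (hagree : (tk PA 1 1).mulVec (χ N) = (tk 1 1 PB).mulVec (χ N))
    (ZA : ℕ → Matrix (Fin dA) (Fin dA) ℂ) (ZB : ℕ → Matrix (Fin dB) (Fin dB) ℂ)
    (hZA : ∀ j ≤ N, (ZA j).PosSemidef) (hZB : ∀ j ≤ N, (ZB j).PosSemidef)
    (hZAN : ZA N = PA) (hZBN : ZB N = PB)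
    (hZAstep : ∀ j < N, (ZA j ⊗ₖ (1 : Matrix (Fin dM) (Fin dM) ℂ) -
      (UA j)ᴴ * (ZA (j + 1) ⊗ₖ (1 : Matrix (Fin dM) (Fin dM) ℂ)) * UA j).PosSemidef)
    (hZBstep : ∀ j < N, ((1 : Matrix (Fin dM) (Fin dM) ℂ) ⊗ₖ ZB j -
      (UB j)ᴴ * ((1 : Matrix (Fin dM) (Fin dM) ℂ) ⊗ₖ ZB (j + 1)) * UB j).PosSemidef) :
    (ZA 0 ⟨0, hdA⟩ ⟨0, hdA⟩).re * (ZB 0 ⟨0, hdB⟩ ⟨0, hdB⟩).re ≥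
    (star ((tk PA 1 1).mulVec (χ N)) ⬝ᵥ ((tk PA 1 1).mulVec (χ N))).re :=
  stmt_8_general dA dM dB N hdA hdM hdB UA UB χ hχ0 hχstep PA PB hPAh hagree ZA ZB hZA hZB hZAN hZBN
    hZAstep hZBstep
end

section
/- Let d_A, d_M ≥ 1 and N ≥ 1 be natural numbers and for j = 1, …, N let U_j be a unitary complex matrix indexed by Fin d_A × Fin d_M. Suppose ρ_0, ρ_1, …, ρ_N are positive semidefinite matrices indexed by Fin d_A × Fin d_M satisfying: (i) for all α, α' ∈ Fin d_A, Σ_{μ ∈ Fin d_M} ρ_0((α,μ),(α',μ)) equals 1 if α = α' = 0 and 0 otherwise; (ii) for each 1 ≤ j ≤ N and all α, α', Σ_μ ρ_j((α,μ),(α',μ)) = Σ_μ (U_j ρ_{j−1} U_j†)((α,μ),(α',μ)). Suppose Z_0, …, Z_N are Hermitian d_A × d_A matrices with U_{j+1}†·(Z_{j+1} ⊗ I_M)·U_{j+1} ⪯ Z_j ⊗ I_M for 0 ≤ j ≤ N−1. Then Re(tr((Z_N ⊗ I_M)·ρ_N)) ≤ Re((Z_0)_{0,0}). (Weak duality for Kitaev's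 cheating SDP: any dual-feasible sequence upper-bounds the value of any cheating strategy.) -/
open Matrix Kronecker
open scoped ComplexOrder

/-!
The value `tr((Z ⊗ I) ρ)` depends on `ρ` only through its partial trace over the message
space, so constraint (ii) and cyclicity of the trace give, with `V = U_{j+1}`,
`tr((Z_{j+1} ⊗ I) ρ_{j+1}) = tr(Vᴴ (Z_{j+1} ⊗ I) V ρ_j) ≤ tr((Z_j ⊗ I) ρ_j)`,
the inequality because the trace of a product of two positive semidefinite matrices is
nonnegative. Telescoping down to `j = 0`, constraint (i) evaluates the last trace to
`(Z_0)_{0,0}`.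
-/

namespace Matrix

variable {a m 𝕜 : Type*} [Fintype a] [Fintype m]

theorem PosSemidef.trace_mul_nonneg [RCLike 𝕜] {A B : Matrix m m 𝕜}
    (hA : A.PosSemidef) (hB : B.PosSemidef) : 0 ≤ (A * B).trace := by
  classical
  open MatrixOrder in
  obtain ⟨C, rfl⟩ := CStarAlgebra.nonneg_iff_eq_star_mul_self.mp hA.nonneg
  rw [star_eq_conjTranspose, Matrix.mul_assoc, trace_mul_comm]
  exact (hB.mul_mul_conjTranspose_same C).trace_nonneg

def partialTraceRight {R : Type*} [AddCommMonoid R] (ρ : Matrix (a × m) (a × m) R) :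
    Matrix a a R :=
  fun α α' => ∑ μ, ρ (α, μ) (α', μ)

theorem trace_kronecker_one_mul {R : Type*} [Semiring R] [DecidableEq m]
    (Z : Matrix a a R) (ρ : Matrix (a × m) (a × m) R) :
    ((Z ⊗ₖ (1 : Matrix m m R)) * ρ).trace = (Z * partialTraceRight ρ).trace := by
  simp only [trace, diag, mul_apply, kroneckerMap_apply, one_apply, partialTraceRight,
    Fintype.sum_prod_type, mul_ite, mul_one, mul_zero, ite_mul, zero_mul, Finset.sum_ite_eq,
    Finset.mem_univ, if_true, Finset.mul_sum]
  exact Finset.sum_congr rfl fun _ _ => Finset.sum_comm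

theorem trace_kronecker_one_mul_le_of_partialTraceRight_eq [RCLike 𝕜] [DecidableEq m]
    {Z Z' : Matrix a a 𝕜} {U ρ σ : Matrix (a × m) (a × m) 𝕜}
    (hdual : (Z ⊗ₖ (1 : Matrix m m 𝕜) - Uᴴ * (Z' ⊗ₖ 1) * U).PosSemidef)
    (hρ : ρ.PosSemidef)
    (hσ : partialTraceRight σ = partialTraceRight (U * ρ * Uᴴ)) :
    ((Z' ⊗ₖ (1 : Matrix m m 𝕜)) * σ).trace ≤ ((Z ⊗ₖ 1) * ρ).trace := by
  calc ((Z' ⊗ₖ (1 : Matrix m m 𝕜)) * σ).trace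
      = ((Z' ⊗ₖ 1) * (U * ρ * Uᴴ)).trace := by
        rw [trace_kronecker_one_mul, hσ, ← trace_kronecker_one_mul]
    _ = (Uᴴ * (Z' ⊗ₖ 1) * U * ρ).trace := by
        rw [← Matrix.mul_assoc, trace_mul_comm, ← Matrix.mul_assoc, ← Matrix.mul_assoc]
    _ ≤ ((Z ⊗ₖ (1 : Matrix m m 𝕜)) * ρ).trace := by
        rw [← sub_nonneg, ← trace_sub, ← Matrix.sub_mul]
        exact hdual.trace_mul_nonneg hρ

end Matrix

theorem stmt_9_general (dA dM N : ℕ) (hdA : 0 < dA)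
    (U : ℕ → Matrix (Fin dA × Fin dM) (Fin dA × Fin dM) ℂ)
    (ρ : ℕ → Matrix (Fin dA × Fin dM) (Fin dA × Fin dM) ℂ)
    (hρ : ∀ j ≤ N, (ρ j).PosSemidef)
    (hρ0 : ∀ α α' : Fin dA, ∑ μ : Fin dM, ρ 0 (α, μ) (α', μ) =
      if α = ⟨0, hdA⟩ ∧ α' = ⟨0, hdA⟩ then 1 else 0)
    (hρstep : ∀ j, 1 ≤ j → j ≤ N → ∀ α α' : Fin dA,
      ∑ μ : Fin dM, ρ j (α, μ) (α', μ) =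
      ∑ μ : Fin dM, (U j * ρ (j - 1) * (U j)ᴴ) (α, μ) (α', μ))
    (Z : ℕ → Matrix (Fin dA) (Fin dA) ℂ)
    (hdual : ∀ j < N, (Z j ⊗ₖ (1 : Matrix (Fin dM) (Fin dM) ℂ) -
      (U (j + 1))ᴴ * (Z (j + 1) ⊗ₖ (1 : Matrix (Fin dM) (Fin dM) ℂ)) * U (j + 1)).PosSemidef) :
    (((Z N ⊗ₖ (1 : Matrix (Fin dM) (Fin dM) ℂ)) * ρ N).trace).re ≤
      (Z 0 ⟨0, hdA⟩ ⟨0, hdA⟩).re := by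
  have hmono : ∀ j ≤ N, ((Z j ⊗ₖ (1 : Matrix (Fin dM) (Fin dM) ℂ)) * ρ j).trace ≤
      ((Z 0 ⊗ₖ 1) * ρ 0).trace := by
    intro j
    induction j with
    | zero => exact fun _ => le_rfl
    | succ j ih =>
      intro hj
      have hstep : partialTraceRight (ρ (j + 1)) =
          partialTraceRight (U (j + 1) * ρ j * (U (j + 1))ᴴ) :=
        funext₂ (hρstep (j + 1) (by omega) hj)
      exact (trace_kronecker_one_mul_le_of_partialTraceRight_eq (hdual j hj)
        (hρ j (by omega)) hstep).trans (ih (by omega))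
  have hρ0' : partialTraceRight (ρ 0) = single ⟨0, hdA⟩ ⟨0, hdA⟩ 1 :=
    funext₂ fun α α' => by simp only [partialTraceRight, hρ0, single_apply, eq_comm]
  have hvalue : ((Z 0 ⊗ₖ (1 : Matrix (Fin dM) (Fin dM) ℂ)) * ρ 0).trace =
      Z 0 ⟨0, hdA⟩ ⟨0, hdA⟩ := by
    rw [trace_kronecker_one_mul, hρ0', trace_mul_single, MulOpposite.op_one, one_smul]
  exact (Complex.le_def.mp (hvalue ▸ hmono N le_rfl)).1

/-- Weak duality for Kitaev's cheating SDP: any dual-feasible sequence `Z_j`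
upper-bounds the value of any feasible cheating strategy `ρ_j` against honest
Alice (whose private space is `ℂ^{d_A}`, the message space being `ℂ^{d_M}`). -/
theorem stmt_9 (dA dM N : ℕ) (hdA : 0 < dA) (hdM : 0 < dM) (hN : 1 ≤ N)
    (U : ℕ → Matrix (Fin dA × Fin dM) (Fin dA × Fin dM) ℂ)
    (hU : ∀ j, 1 ≤ j → j ≤ N → U j ∈ Matrix.unitaryGroup (Fin dA × Fin dM) ℂ)
    (ρ : ℕ → Matrix (Fin dA × Fin dM) (Fin dA × Fin dM) ℂ)
    (hρ : ∀ j ≤ N, (ρ j).PosSemidef)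
    (hρ0 : ∀ α α' : Fin dA, ∑ μ : Fin dM, ρ 0 (α, μ) (α', μ) =
      if α = ⟨0, hdA⟩ ∧ α' = ⟨0, hdA⟩ then 1 else 0)
    (hρstep : ∀ j, 1 ≤ j → j ≤ N → ∀ α α' : Fin dA,
      ∑ μ : Fin dM, ρ j (α, μ) (α', μ) =
      ∑ μ : Fin dM, (U j * ρ (j - 1) * (U j)ᴴ) (α, μ) (α', μ))
    (Z : ℕ → Matrix (Fin dA) (Fin dA) ℂ)
    (hZ : ∀ j ≤ N, (Z j).IsHermitian)
    (hdual : ∀ j < N, (Z j ⊗ₖ (1 : Matrix (Fin dM) (Fin dM) ℂ) -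
      (U (j + 1))ᴴ * (Z (j + 1) ⊗ₖ (1 : Matrix (Fin dM) (Fin dM) ℂ)) * U (j + 1)).PosSemidef) :
    (((Z N ⊗ₖ (1 : Matrix (Fin dM) (Fin dM) ℂ)) * ρ N).trace).re ≤
      (Z 0 ⟨0, hdA⟩ ⟨0, hdA⟩).re :=
  stmt_9_general dA dM N hdA U ρ hρ hρ0 hρstep Z hdual
end

section
/- Let k ≥ 1, d : Fin k → ℕ with d i ≥ 1, m ≥ 1, and N ≥ 1. Write H for the index type ((i : Fin k) → Fin (d i)) × Fin m. Let t : Fin N → Fin k assign to each round the party that moves, and for each j let V_j be a unitary complex matrix indexed by Fin (d (t j)) × Fin m with extension Ṽ_j to H defined by Ṽ_j((a,μ),(a',μ')) = V_j((a (t j), μ),(a' (t j), μ')) if a i = a' i for all i ≠ t j, and 0 otherwise. Let e₀ be the standard basis vector of ℂ^H at index ((fun i => 0), 0) and ψ = Ṽ_N ⋯ Ṽ_1 · e₀. For each i let Π_i be a Hermitian idempotent (d i) × (d i) matrix, and let Π̃_i be the matrix indexed by H with Π̃_i((a,μ),(a',μ')) = Π_i(a i, a' i) if μ = μ' and a l =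 a' l for all l ≠ i, and 0 otherwise. Assume Π̃_i ψ = Π̃_0 ψ for all i (here 0 denotes the first party). Suppose for each i there are positive semidefinite matrices Z_{i,0}, …, Z_{i,N} of size (d i) × (d i) with Z_{i,N} = Π_i, and for each round 1 ≤ j ≤ N: if i = t j then V_j†·(Z_{i,j} ⊗ I_m)·V_j ⪯ Z_{i,j−1} ⊗ I_m, and if i ≠ t j then Z_{i,j−1} = Z_{i,j}. Then Π_{i : Fin k} Re((Z_{i,0})_{0,0}) ≥ ‖Π̃_0 ψ‖². (Certificate form of the multiparty bound p_{1,b}·…·p_{k,b} ≥ p_b.) -/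
open Matrix Kronecker
open scoped ComplexOrder

/-- The extension of a matrix `V` acting on party `t`'s space and the message
space to the joint space of `k` parties (party `i` having space `ℂ^{d i}`) and
an `m`-dimensional message space, acting as identity on all other parties. -/
noncomputable def extParty {k : ℕ} {d : Fin k → ℕ} {m : ℕ} (t : Fin k)
    (V : Matrix (Fin (d t) × Fin m) (Fin (d t) × Fin m) ℂ) :
    Matrix (((i : Fin k) → Fin (d i)) × Fin m) (((i : Fin k) → Fin (d i)) × Fin m) ℂ :=
  fun p q => if ∀ i, i ≠ t → p.1 i = q.1 i then V (p.1 t, p.2) (q.1 t, q.2) else 0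

/-- The extension `Π̃ᵢ` of party `i`'s projection `P` to the joint space,
acting as identity on all other parties and on the message space. -/
noncomputable def extProj {k : ℕ} {d : Fin k → ℕ} (m : ℕ) (i : Fin k)
    (P : Matrix (Fin (d i)) (Fin (d i)) ℂ) :
    Matrix (((l : Fin k) → Fin (d l)) × Fin m) (((l : Fin k) → Fin (d l)) × Fin m) ℂ :=
  fun p q => if p.2 = q.2 ∧ ∀ l, l ≠ i → p.1 l = q.1 l then P (p.1 i) (q.1 i) else 0

/-!
With `W n = (⨂ i, Z i n) ⊗ 1` on the joint space, the quantity `⟪χ n, W n χ n⟫` is nonincreasing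
in `n`: `W j - Ṽⱼᴴ W (j+1) Ṽⱼ` is the dual constraint `Z (t j) j ⊗ 1 - Vⱼᴴ (Z (t j) (j+1) ⊗ 1) Vⱼ`
on the moving party and the message register, tensored with the positive semidefinite `Z i j`
of the parties that do not move, hence is positive semidefinite. At `n = 0` the quantity is
`∏ i, (Z i 0)₀₀`. At `n = N`, `W N = ∏ i, Π̃ᵢ`; since every `Π̃ᵢ` sends `χ N` to the same vector
`φ = Π̃₀ χ N`, each of them fixes `φ`, so `W N χ N = φ` and the quantity is `‖φ‖²`.
-/

section SumProd

variable {κ : Type*} [Fintype κ] [DecidableEq κ] {ι : κ → Type*} {R : Type*}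

lemma prod_univ_apply_update [CommMonoid R] {β : κ → Type*} (φ : ∀ i, β i → R)
    (g : ∀ i, β i) (i₀ : κ) (x : β i₀) :
    ∏ i, φ i (Function.update g i₀ x i) = φ i₀ x * ∏ i ∈ Finset.univ.erase i₀, φ i (g i) := by
  simp_rw [Function.apply_update φ]
  rw [Finset.prod_update_of_mem (Finset.mem_univ i₀), Finset.sdiff_singleton_eq_erase]

lemma sum_pi_mul_prod_erase [∀ i, Fintype (ι i)] [CommSemiring R] (i₀ : κ) (f : ι i₀ → R)
    (g : ∀ i, ι i → R) :
    ∑ a : ∀ i, ι i, f (a i₀) * ∏ i ∈ Finset.univ.erase i₀, g i (a i) =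
      (∑ b, f b) * ∏ i ∈ Finset.univ.erase i₀, ∑ c, g i c :=
  calc ∑ a : ∀ i, ι i, f (a i₀) * ∏ i ∈ Finset.univ.erase i₀, g i (a i)
      = ∑ a : ∀ i, ι i, ∏ i, Function.update g i₀ f i (a i) :=
        Finset.sum_congr rfl fun a _ => (prod_univ_apply_update (fun i h => h (a i)) g i₀ f).symm
    _ = ∏ i, ∑ c, Function.update g i₀ f i c := (Fintype.prod_sum _).symm
    _ = (∑ b, f b) * ∏ i ∈ Finset.univ.erase i₀, ∑ c, g i c :=
        prod_univ_apply_update (fun _ h => ∑ c, h c) g i₀ f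

lemma sum_prod_mul_prod_erase [∀ i, Fintype (ι i)] {μ : Type*} [Fintype μ] [CommSemiring R]
    (i₀ : κ) (f : ι i₀ × μ → R) (g : ∀ i, ι i → R) :
    ∑ r : (∀ i, ι i) × μ, f (r.1 i₀, r.2) * ∏ i ∈ Finset.univ.erase i₀, g i (r.1 i) =
      (∑ x, f x) * ∏ i ∈ Finset.univ.erase i₀, ∑ c, g i c := by
  simp_rw [Fintype.sum_prod_type, ← Finset.sum_mul]
  exact sum_pi_mul_prod_erase i₀ (fun b => ∑ ν, f (b, ν)) g

end SumProd

namespace Matrix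

section KronAt

variable {κ : Type*} [Fintype κ] {ι : κ → Type*} {μ : Type*} {R : Type*}

def piKron [CommMonoid R] (B : ∀ i, Matrix (ι i) (ι i) R) : Matrix (∀ i, ι i) (∀ i, ι i) R :=
  fun p q => ∏ i, B i (p i) (q i)

lemma piKron_one [∀ i, DecidableEq (ι i)] [CommMonoidWithZero R] :
    piKron (1 : ∀ i, Matrix (ι i) (ι i) R) = 1 := by
  ext p q
  simp [piKron, one_apply, Fintype.prod_boole, funext_iff]

variable [DecidableEq κ]

/-- The operator `A ⊗ ⨂_{i ≠ i₀} B i`, where `A` acts jointly on site `i₀` and the register `μ`. -/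
def kronAt [CommMonoid R] (i₀ : κ) (A : Matrix (ι i₀ × μ) (ι i₀ × μ) R)
    (B : ∀ i, Matrix (ι i) (ι i) R) : Matrix ((∀ i, ι i) × μ) ((∀ i, ι i) × μ) R :=
  fun p q => A (p.1 i₀, p.2) (q.1 i₀, q.2) * ∏ i ∈ Finset.univ.erase i₀, B i (p.1 i) (q.1 i)

lemma kronAt_mul [∀ i, Fintype (ι i)] [Fintype μ] [CommSemiring R] (i₀ : κ)
    (A A' : Matrix (ι i₀ × μ) (ι i₀ × μ) R) (B B' : ∀ i, Matrix (ι i) (ι i) R) :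
    kronAt i₀ A B * kronAt i₀ A' B' = kronAt i₀ (A * A') (B * B') := by
  ext p q
  simp only [mul_apply, kronAt, Pi.mul_apply]
  rw [← sum_prod_mul_prod_erase]
  refine Finset.sum_congr rfl fun r _ => ?_
  rw [Finset.prod_mul_distrib]
  ring

lemma kronAt_conjTranspose [CommSemiring R] [StarRing R] (i₀ : κ)
    (A : Matrix (ι i₀ × μ) (ι i₀ × μ) R) (B : ∀ i, Matrix (ι i) (ι i) R) :
    (kronAt i₀ A B)ᴴ = kronAt i₀ Aᴴ (star B) := by
  ext p q
  simp [kronAt, star_mul', star_prod]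

lemma kronAt_sub [CommRing R] (i₀ : κ) (A A' : Matrix (ι i₀ × μ) (ι i₀ × μ) R)
    (B : ∀ i, Matrix (ι i) (ι i) R) :
    kronAt i₀ (A - A') B = kronAt i₀ A B - kronAt i₀ A' B := by
  ext p q
  simp only [kronAt, sub_apply, sub_mul]

lemma kronAt_congr_right [CommMonoid R] (i₀ : κ) (A : Matrix (ι i₀ × μ) (ι i₀ × μ) R)
    {B B' : ∀ i, Matrix (ι i) (ι i) R} (h : ∀ i, i ≠ i₀ → B i = B' i) :
    kronAt i₀ A B = kronAt i₀ A B' := by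
  ext p q
  simp only [kronAt]
  congr 1
  exact Finset.prod_congr rfl fun i hi => by rw [h i (Finset.ne_of_mem_erase hi)]

open scoped MatrixOrder in
lemma posSemidef_kronAt {𝕜 : Type*} [RCLike 𝕜] [∀ i, Fintype (ι i)] [Fintype μ]
    {i₀ : κ} {A : Matrix (ι i₀ × μ) (ι i₀ × μ) 𝕜} {B : ∀ i, Matrix (ι i) (ι i) 𝕜}
    (hA : A.PosSemidef) (hB : ∀ i, i ≠ i₀ → (B i).PosSemidef) :
    (kronAt i₀ A B).PosSemidef := by
  classical
  have hsq : kronAt i₀ A B = (kronAt i₀ (CFC.sqrt A) (fun i => CFC.sqrt (B i)))ᴴ *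
      kronAt i₀ (CFC.sqrt A) (fun i => CFC.sqrt (B i)) := by
    rw [kronAt_conjTranspose, kronAt_mul, (CFC.sqrt_nonneg A).posSemidef.1,
      CFC.sqrt_mul_sqrt_self A hA.nonneg]
    refine kronAt_congr_right i₀ A fun i hi => ?_
    rw [Pi.mul_apply, Pi.star_apply, star_eq_conjTranspose, (CFC.sqrt_nonneg (B i)).posSemidef.1,
      CFC.sqrt_mul_sqrt_self (B i) (hB i hi).nonneg]
  rw [hsq]
  exact posSemidef_conjTranspose_mul_self _

lemma piKron_kronecker_one [DecidableEq μ] [CommSemiring R] (i₀ : κ)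
    (B : ∀ i, Matrix (ι i) (ι i) R) :
    piKron B ⊗ₖ (1 : Matrix μ μ R) = kronAt i₀ (B i₀ ⊗ₖ 1) B := by
  ext p q
  simp only [kroneckerMap_apply, piKron, kronAt, ← Finset.mul_prod_erase Finset.univ _
    (Finset.mem_univ i₀)]
  ring

end KronAt

lemma re_dotProduct_mulVec_le_of_posSemidef_sub {𝕜 l n : Type*} [RCLike 𝕜] [Fintype l]
    [Fintype n] {A : Matrix n n 𝕜} {B : Matrix l l 𝕜} {C : Matrix l n 𝕜}
    (h : (A - Cᴴ * B * C).PosSemidef) (x : n → 𝕜) :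
    RCLike.re (star (C *ᵥ x) ⬝ᵥ B *ᵥ (C *ᵥ x)) ≤ RCLike.re (star x ⬝ᵥ A *ᵥ x) := by
  have hx := (RCLike.nonneg_iff.mp (h.dotProduct_mulVec_nonneg x)).1
  rw [sub_mulVec, dotProduct_sub, map_sub, sub_nonneg] at hx
  rwa [star_mulVec, ← dotProduct_mulVec, mulVec_mulVec, mulVec_mulVec]

end Matrix

section Parties

variable {k : ℕ} {d : Fin k → ℕ} {m : ℕ}

lemma extParty_eq_kronAt (t : Fin k) (U : Matrix (Fin (d t) × Fin m) (Fin (d t) × Fin m) ℂ) :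
    extParty t U = kronAt t U 1 := by
  ext p q
  simp [extParty, kronAt, one_apply, Finset.prod_boole]

lemma extProj_eq_kronAt (i : Fin k) (P : Matrix (Fin (d i)) (Fin (d i)) ℂ) :
    extProj m i P = kronAt i (P ⊗ₖ 1) 1 := by
  ext p q
  simp [extProj, kronAt, one_apply, Finset.prod_boole, ← ite_and, and_comm]

lemma extProj_mul (i : Fin k) (P Q : Matrix (Fin (d i)) (Fin (d i)) ℂ) :
    extProj m i P * extProj m i Q = extProj m i (P * Q) := by
  rw [extProj_eq_kronAt, extProj_eq_kronAt, extProj_eq_kronAt, kronAt_mul, ← mul_kronecker_mul,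
    mul_one, mul_one]

lemma isHermitian_extProj {i : Fin k} {P : Matrix (Fin (d i)) (Fin (d i)) ℂ}
    (hP : P.IsHermitian) :
    (extProj m i P).IsHermitian := by
  rw [extProj_eq_kronAt, IsHermitian, kronAt_conjTranspose, conjTranspose_kronecker, hP.eq,
    conjTranspose_one, star_one]

lemma piKron_kronecker_one_mul_extProj (i : Fin k) (B : ∀ l, Matrix (Fin (d l)) (Fin (d l)) ℂ)
    (P : Matrix (Fin (d i)) (Fin (d i)) ℂ) :
    (piKron B ⊗ₖ (1 : Matrix (Fin m) (Fin m) ℂ)) * extProj m i P =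
      piKron (Function.update B i (B i * P)) ⊗ₖ 1 := by
  rw [extProj_eq_kronAt, piKron_kronecker_one i, piKron_kronecker_one i, kronAt_mul,
    ← mul_kronecker_mul, mul_one, mul_one, Function.update_self]
  exact kronAt_congr_right i _ fun l hl => (Function.update_of_ne hl _ _).symm

lemma piKron_kronecker_one_mulVec_eq_self {P : ∀ i, Matrix (Fin (d i)) (Fin (d i)) ℂ}
    {φ : ((i : Fin k) → Fin (d i)) × Fin m → ℂ} (hφ : ∀ i, extProj m i (P i) *ᵥ φ = φ) :
    (piKron P ⊗ₖ (1 : Matrix (Fin m) (Fin m) ℂ)) *ᵥ φ = φ := by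
  suffices ∀ s : Finset (Fin k),
      (piKron (s.piecewise P 1) ⊗ₖ (1 : Matrix (Fin m) (Fin m) ℂ)) *ᵥ φ = φ by
    simpa using this Finset.univ
  intro s
  induction s using Finset.induction_on with
  | empty => simp [piKron_one]
  | insert a s ha ih =>
    have hPa : P a = s.piecewise P 1 a * P a := by simp [ha]
    rw [Finset.piecewise_insert, hPa, ← piKron_kronecker_one_mul_extProj, ← mulVec_mulVec, hφ, ih]

lemma conjTranspose_extParty_mul_piKron_kronecker_one_mul (t : Fin k)
    (U : Matrix (Fin (d t) × Fin m) (Fin (d t) × Fin m) ℂ)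
    (B : ∀ i, Matrix (Fin (d i)) (Fin (d i)) ℂ) :
    (extParty t U)ᴴ * (piKron B ⊗ₖ (1 : Matrix (Fin m) (Fin m) ℂ)) * extParty t U =
      kronAt t (Uᴴ * (B t ⊗ₖ 1) * U) B := by
  rw [extParty_eq_kronAt, piKron_kronecker_one t, kronAt_conjTranspose, kronAt_mul, kronAt_mul,
    star_one, one_mul, mul_one]

lemma re_dotProduct_extParty_le {t : Fin k}
    {U : Matrix (Fin (d t) × Fin m) (Fin (d t) × Fin m) ℂ}
    {B B' : ∀ i, Matrix (Fin (d i)) (Fin (d i)) ℂ} (hB : ∀ i, i ≠ t → (B i).PosSemidef)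
    (hBB' : ∀ i, i ≠ t → B' i = B i)
    (hU : (B t ⊗ₖ 1 - Uᴴ * (B' t ⊗ₖ 1) * U).PosSemidef)
    (x : ((i : Fin k) → Fin (d i)) × Fin m → ℂ) :
    (star (extParty t U *ᵥ x) ⬝ᵥ (piKron B' ⊗ₖ 1) *ᵥ (extParty t U *ᵥ x)).re ≤
      (star x ⬝ᵥ (piKron B ⊗ₖ 1) *ᵥ x).re := by
  refine re_dotProduct_mulVec_le_of_posSemidef_sub ?_ x
  rw [conjTranspose_extParty_mul_piKron_kronecker_one_mul, piKron_kronecker_one t,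
    kronAt_congr_right t _ hBB', ← kronAt_sub]
  exact posSemidef_kronAt hU hB

lemma dotProduct_piKron_kronecker_one_mulVec_eq {i₀ : Fin k}
    {P : ∀ i, Matrix (Fin (d i)) (Fin (d i)) ℂ} (hPH : ∀ i, (P i).IsHermitian)
    (hP2 : ∀ i, P i * P i = P i) {x : ((i : Fin k) → Fin (d i)) × Fin m → ℂ}
    (hagree : ∀ i, extProj m i (P i) *ᵥ x = extProj m i₀ (P i₀) *ᵥ x) :
    star x ⬝ᵥ (piKron P ⊗ₖ (1 : Matrix (Fin m) (Fin m) ℂ)) *ᵥ x =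
      star (extProj m i₀ (P i₀) *ᵥ x) ⬝ᵥ extProj m i₀ (P i₀) *ᵥ x := by
  set φ := extProj m i₀ (P i₀) *ᵥ x
  have hφ : ∀ i, extProj m i (P i) *ᵥ φ = φ := fun i => by
    rw [← hagree i, mulVec_mulVec, extProj_mul, hP2]
  have hPx : (piKron P ⊗ₖ (1 : Matrix (Fin m) (Fin m) ℂ)) *ᵥ x = φ := by
    conv_lhs => rw [← Function.update_eq_self i₀ P, ← hP2 i₀, ← piKron_kronecker_one_mul_extProj,
      ← mulVec_mulVec]
    exact piKron_kronecker_one_mulVec_eq_self hφ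
  rw [hPx, star_mulVec, ← dotProduct_mulVec, mulVec_mulVec, (isHermitian_extProj (hPH i₀)).eq,
    extProj_mul, hP2]

end Parties

theorem stmt_12_general (k : ℕ) (hk : 0 < k) (d : Fin k → ℕ) (hd : ∀ i, 0 < d i)
    (m : ℕ) (hm : 0 < m) (N : ℕ)
    (t : Fin N → Fin k)
    (V : ∀ j : Fin N, Matrix (Fin (d (t j)) × Fin m) (Fin (d (t j)) × Fin m) ℂ)
    (χ : ℕ → (((i : Fin k) → Fin (d i)) × Fin m → ℂ))
    (hχ0 : χ 0 = fun p => if p = (fun i => ⟨0, hd i⟩, ⟨0, hm⟩) then 1 else 0)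
    (hχstep : ∀ j : Fin N, χ ((j : ℕ) + 1) = (extParty (t j) (V j)).mulVec (χ (j : ℕ)))
    (Proj : ∀ i, Matrix (Fin (d i)) (Fin (d i)) ℂ)
    (hProjH : ∀ i, (Proj i).IsHermitian) (hProj2 : ∀ i, Proj i * Proj i = Proj i)
    (hagree : ∀ i, (extProj m i (Proj i)).mulVec (χ N) =
      (extProj m ⟨0, hk⟩ (Proj ⟨0, hk⟩)).mulVec (χ N))
    (Z : ∀ i, ℕ → Matrix (Fin (d i)) (Fin (d i)) ℂ)
    (hZpsd : ∀ i, ∀ j ≤ N, (Z i j).PosSemidef)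
    (hZN : ∀ i, Z i N = Proj i)
    (hZstep : ∀ j : Fin N, (Z (t j) (j : ℕ) ⊗ₖ (1 : Matrix (Fin m) (Fin m) ℂ) -
      (V j)ᴴ * (Z (t j) ((j : ℕ) + 1) ⊗ₖ (1 : Matrix (Fin m) (Fin m) ℂ)) * V j).PosSemidef)
    (hZfix : ∀ j : Fin N, ∀ i, i ≠ t j → Z i (j : ℕ) = Z i ((j : ℕ) + 1)) :
    ∏ i, (Z i 0 ⟨0, hd i⟩ ⟨0, hd i⟩).re ≥
    (star ((extProj m ⟨0, hk⟩ (Proj ⟨0, hk⟩)).mulVec (χ N)) ⬝ᵥ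
      ((extProj m ⟨0, hk⟩ (Proj ⟨0, hk⟩)).mulVec (χ N))).re := by
  set i₀ : Fin k := ⟨0, hk⟩
  set W : ℕ → Matrix _ _ ℂ := fun n => piKron (fun i => Z i n) ⊗ₖ (1 : Matrix (Fin m) (Fin m) ℂ)
  have hstep : ∀ j : Fin N, (star (χ (j + 1)) ⬝ᵥ W (j + 1) *ᵥ χ (j + 1)).re ≤
      (star (χ j) ⬝ᵥ W j *ᵥ χ j).re := fun j => by
    rw [hχstep j]
    exact re_dotProduct_extParty_le (fun i _ => hZpsd i j j.2.le)
      (fun i hi => (hZfix j i hi).symm) (hZstep j) _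
  have hmono : ∀ n ≤ N, (star (χ n) ⬝ᵥ W n *ᵥ χ n).re ≤ (star (χ 0) ⬝ᵥ W 0 *ᵥ χ 0).re := by
    intro n
    induction n with
    | zero => exact fun _ => le_rfl
    | succ n ih => exact fun hn => (hstep ⟨n, hn⟩).trans (ih (Nat.le_of_succ_le hn))
  have hinit : star (χ 0) ⬝ᵥ W 0 *ᵥ χ 0 = ((∏ i, (Z i 0 ⟨0, hd i⟩ ⟨0, hd i⟩).re : ℝ) : ℂ) := by
    have hχ0' : χ 0 = Pi.single (fun i => ⟨0, hd i⟩, ⟨0, hm⟩) 1 := by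
      rw [hχ0]; ext p; rw [Pi.single_apply]
    simp only [hχ0', W, Pi.star_single, star_one, single_dotProduct, mulVec_single_one, one_mul,
      col_apply, kroneckerMap_apply, piKron, one_apply_eq, mul_one, Complex.ofReal_prod]
    exact Finset.prod_congr rfl fun i _ => ((hZpsd i 0 N.zero_le).1.coe_re_apply_self _).symm
  have hfinal : star (χ N) ⬝ᵥ W N *ᵥ χ N =
      star (extProj m i₀ (Proj i₀) *ᵥ χ N) ⬝ᵥ extProj m i₀ (Proj i₀) *ᵥ χ N := by
    simp only [W, hZN]
    exact dotProduct_piKron_kronecker_one_mulVec_eq hProjH hProj2 hagree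
  have := hmono N le_rfl
  rwa [hinit, Complex.ofReal_re, hfinal] at this

/-- Certificate form of the multiparty bound `p_{1,b} ⋯ p_{k,b} ≥ p_b`:
given, for each party `i`, a dual-feasible sequence `Z i j` for the SDP of
`k-1` cheaters against honest party `i`, the product of the initial entries
bounds the honest probability of the outcome from below.  Here `χ j` is the
honest state after round `j` (round `j` being played by party `t j` using the
unitary `V j`), and `Proj i` is party `i`'s final projection for the outcome. -/
theorem stmt_12 (k : ℕ) (hk : 0 < k) (d : Fin k → ℕ) (hd : ∀ i, 0 < d i)
    (m : ℕ) (hm : 0 < m) (N : ℕ) (hN : 1 ≤ N)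
    (t : Fin N → Fin k)
    (V : ∀ j : Fin N, Matrix (Fin (d (t j)) × Fin m) (Fin (d (t j)) × Fin m) ℂ)
    (hV : ∀ j, V j ∈ Matrix.unitaryGroup (Fin (d (t j)) × Fin m) ℂ)
    (χ : ℕ → (((i : Fin k) → Fin (d i)) × Fin m → ℂ))
    (hχ0 : χ 0 = fun p => if p = (fun i => ⟨0, hd i⟩, ⟨0, hm⟩) then 1 else 0)
    (hχstep : ∀ j : Fin N, χ ((j : ℕ) + 1) = (extParty (t j) (V j)).mulVec (χ (j : ℕ)))
    (Proj : ∀ i, Matrix (Fin (d i)) (Fin (d i)) ℂ)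
    (hProjH : ∀ i, (Proj i).IsHermitian) (hProj2 : ∀ i, Proj i * Proj i = Proj i)
    (hagree : ∀ i, (extProj m i (Proj i)).mulVec (χ N) =
      (extProj m ⟨0, hk⟩ (Proj ⟨0, hk⟩)).mulVec (χ N))
    (Z : ∀ i, ℕ → Matrix (Fin (d i)) (Fin (d i)) ℂ)
    (hZpsd : ∀ i, ∀ j ≤ N, (Z i j).PosSemidef)
    (hZN : ∀ i, Z i N = Proj i)
    (hZstep : ∀ j : Fin N, (Z (t j) (j : ℕ) ⊗ₖ (1 : Matrix (Fin m) (Fin m) ℂ) -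
      (V j)ᴴ * (Z (t j) ((j : ℕ) + 1) ⊗ₖ (1 : Matrix (Fin m) (Fin m) ℂ)) * V j).PosSemidef)
    (hZfix : ∀ j : Fin N, ∀ i, i ≠ t j → Z i (j : ℕ) = Z i ((j : ℕ) + 1)) :
    ∏ i, (Z i 0 ⟨0, hd i⟩ ⟨0, hd i⟩).re ≥
    (star ((extProj m ⟨0, hk⟩ (Proj ⟨0, hk⟩)).mulVec (χ N)) ⬝ᵥ
      ((extProj m ⟨0, hk⟩ (Proj ⟨0, hk⟩)).mulVec (χ N))).re :=
  stmt_12_general k hk d hd m hm N t V χ hχ0 hχstep Proj hProjH hProj2 hagree Z hZpsd hZN hZstep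
    hZfix
end
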